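/- Let n ≥ 1 and let 2m > 0 be an even integer. The subgroup of U_{2n+1} generated by K_{2m}^V together with the scalar matrices {α·1_{2n+1} : α ∈ E, αᾱ = 1, α ∈ 1+𝔭_E^m} is exactly the group J_{2m}^V of all h ∈ U_{2n+1} such that, in block form with block sizes (n,1,n), the (1,2), (3,2), (2,1) and (2,3) blocks have entries in 𝔭_E^m, the central entry lies in 1+𝔭_E^m, and all other entries lie in 𝔬_E. -/

import Mathlib

open Matrix MeasureTheory
open scoped Classical

noncomputable section

namespace Newforms

variable {E : Type} [Field E]

/-- The subset `𝔭_E^m ⊆ E` for `m : ℤ`, where `𝔭_E = ϖ 𝔬_E`. -/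
def Ppow (O : Subring E) (ϖ : E) (m : ℤ) : Set E :=
  {x : E | ∃ y ∈ O, x = ϖ ^ m * y}

/-- `w_k`: the antidiagonal `k × k` matrix with all antidiagonal entries `1`. -/
def wMat (E : Type) [Field E] (k : ℕ) : Matrix (Fin k) (Fin k) E :=
  fun i j => if (i : ℕ) + (j : ℕ) + 1 = k then 1 else 0

/-- `J_{2n} = [[0, wₙ],[−wₙ,0]]`. -/
def Jmat (E : Type) [Field E] (n : ℕ) : Matrix (Fin (2 * n)) (Fin (2 * n)) E :=
  fun i j => if (i : ℕ) + (j : ℕ) + 1 = 2 * n then (if (i : ℕ) < n then (1 : E) else -1) else 0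

/-- The quasi-split even unitary group `U_{2n}`, as a set of matrices:
`ᵗḡ J_{2n} g = J_{2n}`. -/
def USet (σ : E ≃+* E) (n : ℕ) : Set (Matrix (Fin (2 * n)) (Fin (2 * n)) E) :=
  {g | (g.map σ)ᵀ * Jmat E n * g = Jmat E n}

/-- The quasi-split odd unitary group `U_{2n+1}`: `ᵗh̄ w_{2n+1} h = w_{2n+1}`. -/
def UOddSet (σ : E ≃+* E) (n : ℕ) : Set (Matrix (Fin (2 * n + 1)) (Fin (2 * n + 1)) E) :=
  {h | (h.map σ)ᵀ * wMat E (2 * n + 1) * h = wMat E (2 * n + 1)}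

/-- The congruence (shape) conditions defining `K_{2m}^W` inside `U_{2n}`. -/
def KWshape (O : Subring E) (ϖ : E) (n m : ℕ) :
    Set (Matrix (Fin (2 * n)) (Fin (2 * n)) E) :=
  {g | (∀ i j, g i j ∈ O) ∧
    ∀ i j : Fin (2 * n),
      ((i : ℕ) = 0 ∧ (j : ℕ) = 0 → g i j - 1 ∈ Ppow O ϖ m) ∧
      (0 < (i : ℕ) ∧ (i : ℕ) < 2 * n - 1 ∧ (j : ℕ) = 0 → g i j ∈ Ppow O ϖ m) ∧
      ((i : ℕ) = 2 * n - 1 ∧ (j : ℕ) = 0 → g i j ∈ Ppow O ϖ (2 * m)) ∧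
      ((i : ℕ) = 2 * n - 1 ∧ 0 < (j : ℕ) ∧ (j : ℕ) < 2 * n - 1 → g i j ∈ Ppow O ϖ m) ∧
      ((i : ℕ) = 2 * n - 1 ∧ (j : ℕ) = 2 * n - 1 → g i j - 1 ∈ Ppow O ϖ m)}

/-- The compact open subgroup `K_{2m}^W ⊆ U_{2n}`. -/
def KW (σ : E ≃+* E) (O : Subring E) (ϖ : E) (n m : ℕ) :
    Set (Matrix (Fin (2 * n)) (Fin (2 * n)) E) :=
  KWshape O ϖ n m ∩ USet σ n

/-- The congruence (shape) conditions defining `K_{2m}^V` inside `U_{2n+1}`. -/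
def KVshape (O : Subring E) (ϖ : E) (n m : ℕ) :
    Set (Matrix (Fin (2 * n + 1)) (Fin (2 * n + 1)) E) :=
  {h | (∀ i j, h i j ∈ O) ∧
    (∀ i j : Fin (2 * n + 1),
      (((i : ℕ) = n ∧ (j : ℕ) ≠ n) ∨ ((i : ℕ) ≠ n ∧ (j : ℕ) = n) → h i j ∈ Ppow O ϖ m)) ∧
    (∀ i j : Fin (2 * n + 1), (i : ℕ) = n ∧ (j : ℕ) = n → h i j - 1 ∈ Ppow O ϖ (2 * m))}

/-- The compact open subgroup `K_{2m}^V ⊆ U_{2n+1}`. -/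
def KV (σ : E ≃+* E) (O : Subring E) (ϖ : E) (n m : ℕ) :
    Set (Matrix (Fin (2 * n + 1)) (Fin (2 * n + 1)) E) :=
  KVshape O ϖ n m ∩ UOddSet σ n

/-- The shape conditions for `J_{2m}^V` (central entry in `1 + 𝔭_E^m`). -/
def JVshape (O : Subring E) (ϖ : E) (n m : ℕ) :
    Set (Matrix (Fin (2 * n + 1)) (Fin (2 * n + 1)) E) :=
  {h | (∀ i j, h i j ∈ O) ∧
    (∀ i j : Fin (2 * n + 1),
      (((i : ℕ) = n ∧ (j : ℕ) ≠ n) ∨ ((i : ℕ) ≠ n ∧ (j : ℕ) = n) → h i j ∈ Ppow O ϖ m)) ∧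
    (∀ i j : Fin (2 * n + 1), (i : ℕ) = n ∧ (j : ℕ) = n → h i j - 1 ∈ Ppow O ϖ m)}

/-- `x w_k ᵗȳ = Σᵢ xᵢ σ(y_{k-1-i})` for row vectors `x, y ∈ E^k`. -/
def pairW (σ : E ≃+* E) {k : ℕ} (x y : Fin k → E) : E :=
  ∑ i, x i * σ (y i.rev)

/-- `ψ_E(x) = ψ((x + x̄)/2)`. -/
def psiE (σ : E ≃+* E) (ψ : E → ℂ) (x : E) : ℂ := ψ ((x + σ x) / 2)

def idx0 (k : ℕ) : Fin (2 * (k + 1)) := ⟨0, by omega⟩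
def idxLast (k : ℕ) : Fin (2 * (k + 1)) := ⟨2 * k + 1, by omega⟩
def bX {k : ℕ} (i : Fin k) : Fin (2 * (k + 1)) := ⟨(i : ℕ) + 1, by have := i.isLt; omega⟩
def bY {k : ℕ} (i : Fin k) : Fin (2 * (k + 1)) := ⟨(i : ℕ) + (k + 1), by have := i.isLt; omega⟩
def midIdx {k : ℕ} (i : Fin (2 * k)) : Fin (2 * (k + 1)) :=
  ⟨(i : ℕ) + 1, by have := i.isLt; omega⟩

/-- The Heisenberg element `𝐯(x,y;z) ∈ U_{2n}` (here `n = k+1` and `x, y ∈ E^{n-1} = E^k`). -/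
def vMat (σ : E ≃+* E) (k : ℕ) (x y : Fin k → E) (z : E) :
    Matrix (Fin (2 * (k + 1))) (Fin (2 * (k + 1))) E :=
  1 + (∑ i, Matrix.single (idx0 k) (bX i) (x i))
    + (∑ i, Matrix.single (idx0 k) (bY i) (y i))
    + (∑ i, Matrix.single (bX i) (idxLast k) (σ (y i.rev)))
    + (∑ i, Matrix.single (bY i) (idxLast k) (-σ (x i.rev)))
    + Matrix.single (idx0 k) (idxLast k) (z + (pairW σ x y - pairW σ y x) / 2)

/-- The Heisenberg group `H_{n-1} = {𝐯(x,y;z) | x, y ∈ E^{n-1}, z ∈ F}` (with `n = k+1`). -/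
def Hset (σ : E ≃+* E) (k : ℕ) : Set (Matrix (Fin (2 * (k + 1))) (Fin (2 * (k + 1))) E) :=
  {g | ∃ x y : Fin k → E, ∃ z : E, σ z = z ∧ g = vMat σ k x y z}

/-- The embedding `U_{2n-2} → U_{2n}, g' ↦ diag(1, g', 1)` (here `n = k+1`). -/
def iotaU (k : ℕ) (g : Matrix (Fin (2 * k)) (Fin (2 * k)) E) :
    Matrix (Fin (2 * (k + 1))) (Fin (2 * (k + 1))) E :=
  Matrix.single (idx0 k) (idx0 k) 1
    + Matrix.single (idxLast k) (idxLast k) 1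
    + ∑ i, ∑ j, Matrix.single (midIdx i) (midIdx j) (g i j)

/-- `d_t = diag(t, 1_{2n-2}, t̄⁻¹)`. -/
def dtW (σ : E ≃+* E) (n : ℕ) (t : E) : Matrix (Fin (2 * n)) (Fin (2 * n)) E :=
  Matrix.diagonal fun i =>
    if (i : ℕ) = 0 then t else if (i : ℕ) = 2 * n - 1 then (σ t)⁻¹ else 1

/-- `diag(ϖ^{-m}, 1_{2n-2}, ϖ^m)`. -/
def dWmat (ϖ : E) (n : ℕ) (m : ℤ) : Matrix (Fin (2 * n)) (Fin (2 * n)) E :=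
  Matrix.diagonal fun i =>
    if (i : ℕ) = 0 then ϖ ^ (-m) else if (i : ℕ) = 2 * n - 1 then ϖ ^ m else 1

/-- `diag(ϖ^{-m}·1_n, 1, ϖ^m·1_n)`. -/
def dVmat (ϖ : E) (n : ℕ) (m : ℤ) : Matrix (Fin (2 * n + 1)) (Fin (2 * n + 1)) E :=
  Matrix.diagonal fun i =>
    if (i : ℕ) < n then ϖ ^ (-m) else if (i : ℕ) = n then 1 else ϖ ^ m

/-- The span of `{π(𝐯(0,0;z)) v − χ(z) v}`: the kernel of `π ↠ π_χ`. -/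
def FJkernel (σ : E ≃+* E) (k : ℕ) {V : Type} [AddCommGroup V] [Module ℂ V]
    (π : Matrix (Fin (2 * (k + 1))) (Fin (2 * (k + 1))) E → (V →ₗ[ℂ] V)) (χ : E → ℂ) :
    Submodule ℂ V :=
  Submodule.span ℂ {w | ∃ z : E, σ z = z ∧ ∃ v : V, w = π (vMat σ k 0 0 z) v - χ z • v}

/-- The submodule `π^K` of `K`-fixed vectors. -/
def fixedSub {V : Type} [AddCommGroup V] [Module ℂ V] {α : Type}
    (π : α → (V →ₗ[ℂ] V)) (K : Set α) : Submodule ℂ V where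
  carrier := {v | ∀ g ∈ K, π g v = v}
  add_mem' := by
    intro a b ha hb g hg
    rw [map_add, ha g hg, hb g hg]
  zero_mem' := by
    intro g hg
    exact map_zero _
  smul_mem' := by
    intro c v hv g hg
    rw [_root_.map_smul, hv g hg]

/-- The skew-hermitian form on `W = E^{2n}` in the basis `f_n, …, f_1, f_{-1}, …, f_{-n}`. -/
def formW (σ : E ≃+* E) (n : ℕ) (u v : Fin (2 * n) → E) : E :=
  ∑ i : Fin (2 * n), σ (u i) * v i.rev * (if (i : ℕ) < n then 1 else -1)

/-- The lattice `(⊕_{i≠0} 𝔬_E e_i) ⊕ 𝔭_E^m e_0` in `V = E^{2n+1}` (coordinate `n` is `e_0`). -/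
def MVlat (O : Subring E) (ϖ : E) (n : ℕ) (m : ℤ) : Set (Fin (2 * n + 1) → E) :=
  {u | (∀ i : Fin (2 * n + 1), (i : ℕ) ≠ n → u i ∈ O) ∧
       ∀ i : Fin (2 * n + 1), (i : ℕ) = n → u i ∈ Ppow O ϖ m}

/-- The lattice `(⊕_{i≠-n} 𝔬_E f_i) ⊕ 𝔭_E^m f_{-n}` in `W = E^{2n}`
(coordinate `2n-1` is `f_{-n}`). -/
def NWlat (O : Subring E) (ϖ : E) (n : ℕ) (m : ℤ) : Set (Fin (2 * n) → E) :=
  {u | (∀ i : Fin (2 * n), (i : ℕ) ≠ 2 * n - 1 → u i ∈ O) ∧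
       ∀ i : Fin (2 * n), (i : ℕ) = 2 * n - 1 → u i ∈ Ppow O ϖ m}

/-- The lattice `𝔭_E^m f_n ⊕ (⊕_{i≠n} 𝔬_E f_i)` in `W = E^{2n}` (coordinate `0` is `f_n`). -/
def NWdual (O : Subring E) (ϖ : E) (n : ℕ) (m : ℤ) : Set (Fin (2 * n) → E) :=
  {u | (∀ i : Fin (2 * n), (i : ℕ) ≠ 0 → u i ∈ O) ∧
       ∀ i : Fin (2 * n), (i : ℕ) = 0 → u i ∈ Ppow O ϖ m}

/-- `𝕎 = V ⊗_E W` realized as `(2n+1) × 2n` matrices via the bases `(e_i)` and `(f_j)`;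
this is `⟨T, T'⟩_V ⊗ ⟨,⟩_W`-pairing before taking the trace to `F`. -/
def formVW (σ : E ≃+* E) (n : ℕ) (T T' : Matrix (Fin (2 * n + 1)) (Fin (2 * n)) E) : E :=
  ∑ i, ∑ j, σ (T i j) * T' i.rev j.rev * (if (j : ℕ) < n then 1 else -1)

/-- The symplectic `F`-bilinear form `⟨v⊗w, v'⊗w'⟩ = tr_{E/F}(⟨v,v'⟩_V ⟨w,w'⟩_W)` on `𝕎`. -/
def sympForm (σ : E ≃+* E) (n : ℕ) (T T' : Matrix (Fin (2 * n + 1)) (Fin (2 * n)) E) : E :=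
  formVW σ n T T' + σ (formVW σ n T T')

/-- The self-dual lattice `A = Γ_V ⊗ Γ_W ⊆ 𝕎`. -/
def ASet (O : Subring E) (n : ℕ) : Set (Matrix (Fin (2 * n + 1)) (Fin (2 * n)) E) :=
  {T | ∀ i j, T i j ∈ O}

/-- The Weyl-type element `w_{1,n-1} ∈ U_{2n}` (here `n = k+1`). -/
def w1Mat (E : Type) [Field E] (k : ℕ) : Matrix (Fin (2 * (k + 1))) (Fin (2 * (k + 1))) E :=
  (∑ i : Fin k, Matrix.single (⟨(i : ℕ), by have := i.isLt; omega⟩ : Fin (2 * (k + 1)))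
      ⟨(i : ℕ) + 1, by have := i.isLt; omega⟩ 1)
  + Matrix.single (⟨k, by omega⟩ : Fin (2 * (k + 1))) ⟨0, by omega⟩ 1
  + Matrix.single (⟨k + 1, by omega⟩ : Fin (2 * (k + 1))) ⟨2 * k + 1, by omega⟩ 1
  + (∑ i : Fin k, Matrix.single
      (⟨k + 2 + (i : ℕ), by have := i.isLt; omega⟩ : Fin (2 * (k + 1)))
      ⟨k + 1 + (i : ℕ), by have := i.isLt; omega⟩ 1)

/-- `𝐦(a) = diag(1, a, w_{n-1} ᵗā⁻¹ w_{n-1}⁻¹, 1) ∈ U_{2n}` (here `n = k+1`). -/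
def mMatBig (σ : E ≃+* E) (k : ℕ) (a : Matrix (Fin k) (Fin k) E) :
    Matrix (Fin (2 * (k + 1))) (Fin (2 * (k + 1))) E :=
  Matrix.single (idx0 k) (idx0 k) 1
    + Matrix.single (idxLast k) (idxLast k) 1
    + (∑ i, ∑ j, Matrix.single (bX i) (bX j) (a i j))
    + (∑ i, ∑ j, Matrix.single (bY i) (bY j)
        ((wMat E k * ((a⁻¹).map σ)ᵀ * (wMat E k)⁻¹) i j))

/-- The unipotent element `g_u` with `ᵗu` in block position `(1,2)` and `−ū w_{n-1}` in block
position `(3,4)` (block sizes `(n-1,1,1,n-1)`, `n = k+1`). -/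
def gUMat (σ : E ≃+* E) (k : ℕ) (u : Fin k → E) :
    Matrix (Fin (2 * (k + 1))) (Fin (2 * (k + 1))) E :=
  1 + (∑ i : Fin k, Matrix.single
        (⟨(i : ℕ), by have := i.isLt; omega⟩ : Fin (2 * (k + 1))) ⟨k, by omega⟩ (u i))
    + (∑ j : Fin k, Matrix.single (⟨k + 1, by omega⟩ : Fin (2 * (k + 1)))
        ⟨k + 2 + (j : ℕ), by have := j.isLt; omega⟩ (-σ (u j.rev)))

/-- The pure tensor `e_0 ⊗ w ∈ 𝕎` in matrix coordinates. -/
def e0tensor {E : Type} [Field E] (n : ℕ) (w : Fin (2 * n) → E) :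
    Matrix (Fin (2 * n + 1)) (Fin (2 * n)) E :=
  fun i j => if (i : ℕ) = n then w j else 0

/-- The lattice-model function `φ_{t,w}`, supported on `A + t e_0 ⊗ w` with
`φ_{t,w}(a + t e_0 ⊗ w) = ψ(−½⟨a, t e_0 ⊗ w⟩)`. -/
def phiTW (σ : E ≃+* E) (O : Subring E) (ψ : E → ℂ) (n : ℕ) (t : E) (w : Fin (2 * n) → E)
    (u : Matrix (Fin (2 * n + 1)) (Fin (2 * n)) E) : ℂ :=
  if (∀ i j, (u - t • e0tensor n w) i j ∈ O) then
    ψ (-sympForm σ n (u - t • e0tensor n w) (t • e0tensor n w) / 2)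
  else 0

/-- `K_0^W = U_{2n} ∩ GL_{2n}(𝔬_E)`. -/
def K0Set (σ : E ≃+* E) (O : Subring E) (n : ℕ) :
    Set (Matrix (Fin (2 * n)) (Fin (2 * n)) E) :=
  {g | g ∈ USet σ n ∧ ∀ i j, g i j ∈ O}

/-- `Y ⊆ E^{2n}`: the span of the first `n` coordinates. -/
def YSet (E : Type) [Field E] (n : ℕ) : Set (Fin (2 * n) → E) :=
  {v | ∀ i : Fin (2 * n), n ≤ (i : ℕ) → v i = 0}

/-- The Siegel parabolic `Q_{2n} = {g ∈ U_{2n} : g Y = Y}`. -/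
def QSet (σ : E ≃+* E) (n : ℕ) : Set (Matrix (Fin (2 * n)) (Fin (2 * n)) E) :=
  {g | g ∈ USet σ n ∧ (fun v => g.mulVec v) '' YSet E n = YSet E n}

/-- `K_S`: elements of `K_0^W` whose lower-left `n × n` block has entries in `𝔭_E`. -/
def KSSet (σ : E ≃+* E) (O : Subring E) (ϖ : E) (n : ℕ) :
    Set (Matrix (Fin (2 * n)) (Fin (2 * n)) E) :=
  {g | g ∈ K0Set σ O n ∧
    ∀ i j : Fin (2 * n), n ≤ (i : ℕ) → (j : ℕ) < n → g i j ∈ Ppow O ϖ 1}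

/-- `K_M`: elements of `K_0^W` with blocks `(2,1)`, `(3,1)`, `(3,2)` (block sizes
`(1, 2n-2, 1)`) having entries in `𝔭_E`. -/
def KMSet (σ : E ≃+* E) (O : Subring E) (ϖ : E) (n : ℕ) :
    Set (Matrix (Fin (2 * n)) (Fin (2 * n)) E) :=
  {g | g ∈ K0Set σ O n ∧ ∀ i j : Fin (2 * n),
      ((0 < (i : ℕ) ∧ (j : ℕ) = 0) ∨ ((i : ℕ) = 2 * n - 1 ∧ (j : ℕ) < 2 * n - 1)) →
      g i j ∈ Ppow O ϖ 1}

/-- The Schwartz space `𝒮(E^k)` of locally constant compactly supported functions, as a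
`ℂ`-submodule of all functions. -/
def SMod (E : Type) [Field E] [TopologicalSpace E] (k : ℕ) :
    Submodule ℂ ((Fin k → E) → ℂ) where
  carrier := {f | (∀ ξ, ∃ U ∈ nhds ξ, ∀ η ∈ U, f η = f ξ) ∧
                  ∃ C : Set (Fin k → E), IsCompact C ∧ ∀ ξ ∉ C, f ξ = 0}
  add_mem' := by
    rintro f g ⟨hf1, Cf, hCf, hf2⟩ ⟨hg1, Cg, hCg, hg2⟩
    refine ⟨fun ξ => ?_, Cf ∪ Cg, hCf.union hCg, fun ξ hξ => ?_⟩
    · obtain ⟨U, hU, hUf⟩ := hf1 ξ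
      obtain ⟨Vv, hV, hVg⟩ := hg1 ξ
      exact ⟨U ∩ Vv, Filter.inter_mem hU hV, fun η hη => by
        simp only [Pi.add_apply, hUf η hη.1, hVg η hη.2]⟩
    · simp only [Pi.add_apply, hf2 ξ (fun h => hξ (Set.mem_union_left _ h)),
        hg2 ξ (fun h => hξ (Set.mem_union_right _ h)), add_zero]
  zero_mem' := by
    refine ⟨fun ξ => ⟨Set.univ, Filter.univ_mem, fun η _ => rfl⟩,
      ∅, isCompact_empty, fun ξ _ => rfl⟩
  smul_mem' := by
    rintro c f ⟨hf1, Cf, hCf, hf2⟩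
    refine ⟨fun ξ => ?_, Cf, hCf, fun ξ hξ => ?_⟩
    · obtain ⟨U, hU, hUf⟩ := hf1 ξ
      exact ⟨U, hU, fun η hη => by simp only [Pi.smul_apply, hUf η hη]⟩
    · simp only [Pi.smul_apply, hf2 ξ hξ, smul_zero]

end Newforms

/-!
Every `h ∈ U_{2n+1}` has `h⁻¹ = w ᵗh̄ w`, so `J_{2m}^V` is closed under products and inverses and
contains the generators. Conversely, for `g ∈ J_{2m}^V` with central entry `β ∈ 1 + 𝔭_E^m`, the
central entry of `ᵗḡ w g = w` shows `β̄β ∈ 1 + 𝔭_E^{2m}`. With `α = (1 + β) / (1 + β̄)` we have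
`αᾱ = 1`, `α ∈ 1 + 𝔭_E^m` and `ᾱβ ∈ 1 + 𝔭_E^{2m}`, so `g = α · (ᾱ g)` with `ᾱ g ∈ K_{2m}^V`.
-/

namespace Newforms

variable {E : Type} [Field E]

section Ppow

variable {O : Subring E} {ϖ : E}

lemma zero_mem_Ppow (k : ℤ) : (0 : E) ∈ Ppow O ϖ k :=
  ⟨0, O.zero_mem, by ring⟩

lemma add_mem_Ppow {k : ℤ} {x y : E} (hx : x ∈ Ppow O ϖ k) (hy : y ∈ Ppow O ϖ k) :
    x + y ∈ Ppow O ϖ k := by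
  obtain ⟨a, ha, rfl⟩ := hx
  obtain ⟨b, hb, rfl⟩ := hy
  exact ⟨a + b, O.add_mem ha hb, by ring⟩

lemma mul_mem_Ppow_left {k : ℤ} {c x : E} (hc : c ∈ O) (hx : x ∈ Ppow O ϖ k) :
    c * x ∈ Ppow O ϖ k := by
  obtain ⟨a, ha, rfl⟩ := hx
  exact ⟨c * a, O.mul_mem hc ha, by ring⟩

lemma mul_mem_Ppow_right {k : ℤ} {c x : E} (hc : c ∈ O) (hx : x ∈ Ppow O ϖ k) :
    x * c ∈ Ppow O ϖ k :=
  mul_comm c x ▸ mul_mem_Ppow_left hc hx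

lemma neg_mem_Ppow {k : ℤ} {x : E} (hx : x ∈ Ppow O ϖ k) : -x ∈ Ppow O ϖ k :=
  neg_one_mul x ▸ mul_mem_Ppow_left (O.neg_mem O.one_mem) hx

lemma sub_mem_Ppow {k : ℤ} {x y : E} (hx : x ∈ Ppow O ϖ k) (hy : y ∈ Ppow O ϖ k) :
    x - y ∈ Ppow O ϖ k :=
  sub_eq_add_neg x y ▸ add_mem_Ppow hx (neg_mem_Ppow hy)

lemma sum_mem_Ppow {k : ℤ} {ι : Type*} {s : Finset ι} {f : ι → E}
    (h : ∀ i ∈ s, f i ∈ Ppow O ϖ k) : ∑ i ∈ s, f i ∈ Ppow O ϖ k :=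
  Finset.sum_induction f (· ∈ Ppow O ϖ k) (fun _ _ => add_mem_Ppow) (zero_mem_Ppow k) h

lemma mul_mem_Ppow_add (hϖ0 : ϖ ≠ 0) {k l : ℤ} {x y : E}
    (hx : x ∈ Ppow O ϖ k) (hy : y ∈ Ppow O ϖ l) : x * y ∈ Ppow O ϖ (k + l) := by
  obtain ⟨a, ha, rfl⟩ := hx
  obtain ⟨b, hb, rfl⟩ := hy
  exact ⟨a * b, O.mul_mem ha hb, by rw [zpow_add₀ hϖ0]; ring⟩

lemma map_mem_Ppow (σ : E ≃+* E) (hσO : ∀ x ∈ O, σ x ∈ O) (hϖF : σ ϖ = ϖ) {k : ℤ} {x : E}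
    (hx : x ∈ Ppow O ϖ k) : σ x ∈ Ppow O ϖ k := by
  obtain ⟨a, ha, rfl⟩ := hx
  exact ⟨σ a, hσO a ha, by rw [map_mul, map_zpow₀, hϖF]⟩

lemma map_sub_one_mem_Ppow (σ : E ≃+* E) (hσO : ∀ x ∈ O, σ x ∈ O) (hϖF : σ ϖ = ϖ) {k : ℤ}
    {x : E} (hx : x - 1 ∈ Ppow O ϖ k) : σ x - 1 ∈ Ppow O ϖ k := by
  simpa using map_mem_Ppow σ hσO hϖF hx

lemma Ppow_natCast_subset (hϖO : ϖ ∈ O) (k : ℕ) : Ppow O ϖ k ⊆ O := by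
  rintro _ ⟨a, ha, rfl⟩
  rw [zpow_natCast]
  exact O.mul_mem (O.pow_mem hϖO k) ha

lemma Ppow_natCast_anti (hϖO : ϖ ∈ O) {k l : ℕ} (hlk : l ≤ k) :
    Ppow O ϖ k ⊆ Ppow O ϖ l := by
  rintro _ ⟨a, ha, rfl⟩
  refine ⟨ϖ ^ (k - l) * a, O.mul_mem (O.pow_mem hϖO _) ha, ?_⟩
  rw [zpow_natCast, zpow_natCast, ← mul_assoc, ← pow_add, Nat.add_sub_cancel' hlk]

lemma mem_of_sub_one_mem_Ppow (hϖO : ϖ ∈ O) {k : ℕ} {x : E}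
    (hx : x - 1 ∈ Ppow O ϖ k) : x ∈ O :=
  sub_add_cancel x 1 ▸ O.add_mem (Ppow_natCast_subset hϖO k hx) O.one_mem

lemma one_add_ne_zero_and_inv_mem (hϖO : ϖ ∈ O) (hϖnu : ϖ⁻¹ ∉ O)
    (hϖgen : ∀ x ∈ O, x⁻¹ ∉ O → x ∈ Ppow O ϖ 1) {x : E} (hx : x ∈ Ppow O ϖ 1) :
    1 + x ≠ 0 ∧ (1 + x)⁻¹ ∈ O := by
  obtain ⟨a, ha, rfl⟩ := hx
  rw [zpow_one]
  constructor
  · intro h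
    exact hϖnu (inv_eq_of_mul_eq_one_right (by linear_combination -h : ϖ * -a = 1) ▸
      O.neg_mem ha)
  · by_contra hinv
    obtain ⟨b, hb, hab⟩ := hϖgen _ (O.add_mem O.one_mem (O.mul_mem hϖO ha)) hinv
    rw [zpow_one] at hab
    exact hϖnu (inv_eq_of_mul_eq_one_right (by linear_combination -hab : ϖ * (b - a) = 1) ▸
      O.sub_mem hb ha)

lemma ne_zero_and_inv_mem_of_sub_mem_Ppow_one (hϖO : ϖ ∈ O) (hϖnu : ϖ⁻¹ ∉ O)
    (hϖgen : ∀ x ∈ O, x⁻¹ ∉ O → x ∈ Ppow O ϖ 1) {a x : E} (ha0 : a ≠ 0) (ha : a⁻¹ ∈ O)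
    (hx : x - a ∈ Ppow O ϖ 1) : x ≠ 0 ∧ x⁻¹ ∈ O := by
  obtain ⟨hne, hinv⟩ :=
    one_add_ne_zero_and_inv_mem hϖO hϖnu hϖgen (mul_mem_Ppow_left ha hx)
  have hx : x = a * (1 + a⁻¹ * (x - a)) := by field_simp; ring
  rw [hx, mul_inv]
  exact ⟨mul_ne_zero ha0 hne, O.mul_mem ha hinv⟩

end Ppow

section UnitaryGroup

variable (σ : E ≃+* E)

lemma wMat_eq_toMatrix (K : ℕ) :
    wMat E K = (Fin.revPerm.toPEquiv.toMatrix : Matrix (Fin K) (Fin K) E) := by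
  ext i j
  simp only [wMat, PEquiv.toMatrix_apply, Equiv.toPEquiv_apply, Option.mem_def,
    Option.some.injEq, Fin.revPerm_apply, Fin.ext_iff, Fin.val_rev]
  exact if_congr (by omega) rfl rfl

lemma wMat_mul_apply {K : ℕ} (M : Matrix (Fin K) (Fin K) E) (i j : Fin K) :
    (wMat E K * M) i j = M i.rev j := by
  rw [wMat_eq_toMatrix, PEquiv.toMatrix_toPEquiv_mul]
  rfl

lemma mul_wMat_apply {K : ℕ} (M : Matrix (Fin K) (Fin K) E) (i j : Fin K) :
    (M * wMat E K) i j = M i j.rev := by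
  rw [wMat_eq_toMatrix, PEquiv.mul_toMatrix_toPEquiv, Fin.revPerm_symm]
  rfl

lemma wMat_mul_wMat (K : ℕ) : wMat E K * wMat E K = 1 := by
  ext i j
  rw [wMat_mul_apply, wMat, Matrix.one_apply]
  simp only [Fin.ext_iff, Fin.val_rev]
  exact if_congr (by omega) rfl rfl

lemma map_transpose_mul {K : ℕ} (A B : Matrix (Fin K) (Fin K) E) :
    ((A * B).map σ)ᵀ = (B.map σ)ᵀ * (A.map σ)ᵀ := by
  rw [Matrix.map_mul, Matrix.transpose_mul]

variable {σ} {n : ℕ}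

lemma one_mem_UOddSet : (1 : Matrix (Fin (2 * n + 1)) (Fin (2 * n + 1)) E) ∈ UOddSet σ n := by
  simp [UOddSet]

lemma mul_mem_UOddSet {g h : Matrix (Fin (2 * n + 1)) (Fin (2 * n + 1)) E}
    (hg : g ∈ UOddSet σ n) (hh : h ∈ UOddSet σ n) : g * h ∈ UOddSet σ n := by
  change ((g * h).map σ)ᵀ * wMat E (2 * n + 1) * (g * h) = wMat E (2 * n + 1)
  calc _ = (h.map σ)ᵀ * ((g.map σ)ᵀ * wMat E (2 * n + 1) * g) * h := by
        rw [map_transpose_mul]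
        simp only [Matrix.mul_assoc]
    _ = wMat E (2 * n + 1) := by rw [hg, hh]

lemma smul_one_mem_UOddSet {α : E} (hα : α * σ α = 1) :
    α • (1 : Matrix (Fin (2 * n + 1)) (Fin (2 * n + 1)) E) ∈ UOddSet σ n := by
  change ((α • 1 : Matrix _ _ E).map σ)ᵀ * _ * (α • 1) = _
  simp [Matrix.map_smul', smul_smul, hα]

lemma wMat_mul_map_transpose_mul_wMat_mul_of_mem_UOddSet
    {h : Matrix (Fin (2 * n + 1)) (Fin (2 * n + 1)) E} (hh : h ∈ UOddSet σ n) :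
    wMat E (2 * n + 1) * (h.map σ)ᵀ * wMat E (2 * n + 1) * h = 1 := by
  have hh : (h.map σ)ᵀ * wMat E (2 * n + 1) * h = wMat E (2 * n + 1) := hh
  calc _ = wMat E (2 * n + 1) * ((h.map σ)ᵀ * wMat E (2 * n + 1) * h) := by
        simp only [Matrix.mul_assoc]
    _ = 1 := by rw [hh, wMat_mul_wMat]

lemma inv_eq_of_mem_UOddSet {h : Matrix (Fin (2 * n + 1)) (Fin (2 * n + 1)) E}
    (hh : h ∈ UOddSet σ n) :
    h⁻¹ = wMat E (2 * n + 1) * (h.map σ)ᵀ * wMat E (2 * n + 1) :=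
  Matrix.inv_eq_left_inv (wMat_mul_map_transpose_mul_wMat_mul_of_mem_UOddSet hh)

lemma inv_apply_of_mem_UOddSet {h : Matrix (Fin (2 * n + 1)) (Fin (2 * n + 1)) E}
    (hh : h ∈ UOddSet σ n) (i j : Fin (2 * n + 1)) : h⁻¹ i j = σ (h j.rev i.rev) := by
  rw [inv_eq_of_mem_UOddSet hh, mul_wMat_apply, wMat_mul_apply]
  rfl

lemma inv_mem_UOddSet {h : Matrix (Fin (2 * n + 1)) (Fin (2 * n + 1)) E}
    (hh : h ∈ UOddSet σ n) : h⁻¹ ∈ UOddSet σ n := by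
  have hdet : IsUnit h.det := Matrix.isUnit_det_of_left_inverse
    (wMat_mul_map_transpose_mul_wMat_mul_of_mem_UOddSet hh)
  have hstar : (h⁻¹.map σ)ᵀ * (h.map σ)ᵀ = 1 := by
    rw [← map_transpose_mul, Matrix.mul_nonsing_inv h hdet]
    simp
  have hh : (h.map σ)ᵀ * wMat E (2 * n + 1) * h = wMat E (2 * n + 1) := hh
  change (h⁻¹.map σ)ᵀ * wMat E (2 * n + 1) * h⁻¹ = wMat E (2 * n + 1)
  calc _ = (h⁻¹.map σ)ᵀ * ((h.map σ)ᵀ * wMat E (2 * n + 1) * h) * h⁻¹ := by rw [hh]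
    _ = (h⁻¹.map σ)ᵀ * (h.map σ)ᵀ * wMat E (2 * n + 1) * (h * h⁻¹) := by
        simp only [Matrix.mul_assoc]
    _ = wMat E (2 * n + 1) := by
        rw [hstar, Matrix.mul_nonsing_inv h hdet, Matrix.one_mul, Matrix.mul_one]

end UnitaryGroup

section Shapes

variable {O : Subring E} {ϖ : E} {n m : ℕ}

lemma val_rev_eq_iff (a : Fin (2 * n + 1)) : (a.rev : ℕ) = n ↔ (a : ℕ) = n := by
  rw [Fin.val_rev]
  omega

lemma smul_one_mem_JVshape {α : E} (hαO : α ∈ O) (hα : α - 1 ∈ Ppow O ϖ m) :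
    α • (1 : Matrix (Fin (2 * n + 1)) (Fin (2 * n + 1)) E) ∈ JVshape O ϖ n m := by
  refine ⟨fun i j => ?_, fun i j hij => ?_, fun i j ⟨hi, hj⟩ => ?_⟩
  · rw [Matrix.smul_apply, Matrix.one_apply, smul_eq_mul]
    split_ifs
    · exact (mul_one α).symm ▸ hαO
    · exact (mul_zero α).symm ▸ O.zero_mem
  · rw [Matrix.smul_apply, Matrix.one_apply_ne (by rintro rfl; tauto), smul_zero]
    exact zero_mem_Ppow _
  · obtain rfl : i = j := Fin.ext (hi.trans hj.symm)
    rwa [Matrix.smul_apply, Matrix.one_apply_eq, smul_eq_mul, mul_one]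

lemma KVshape_subset_JVshape (hϖO : ϖ ∈ O) : KVshape O ϖ n m ⊆ JVshape O ϖ n m := by
  rintro h ⟨hO, hoff, hc⟩
  refine ⟨hO, hoff, fun i j hij => Ppow_natCast_anti hϖO (k := 2 * m) (by omega) ?_⟩
  exact_mod_cast hc i j hij

lemma mul_mem_JVshape {g h : Matrix (Fin (2 * n + 1)) (Fin (2 * n + 1)) E}
    (hg : g ∈ JVshape O ϖ n m) (hh : h ∈ JVshape O ϖ n m) : g * h ∈ JVshape O ϖ n m := by
  obtain ⟨hgO, hgoff, hgc⟩ := hg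
  obtain ⟨hhO, hhoff, hhc⟩ := hh
  refine ⟨fun i j => ?_, fun i j hij => ?_, fun i j ⟨hi, hj⟩ => ?_⟩
  · exact Matrix.mul_apply (M := g) ▸ O.sum_mem fun k _ => O.mul_mem (hgO i k) (hhO k j)
  · refine Matrix.mul_apply (M := g) ▸ sum_mem_Ppow fun k _ => ?_
    by_cases hkj : ((k : ℕ) = n ∧ (j : ℕ) ≠ n) ∨ ((k : ℕ) ≠ n ∧ (j : ℕ) = n)
    · exact mul_mem_Ppow_left (hgO i k) (hhoff k j hkj)
    · exact mul_mem_Ppow_right (hhO k j) (hgoff i k (by omega))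
  · obtain rfl : i = j := Fin.ext (hi.trans hj.symm)
    have hoff_row : ∀ k ∈ Finset.univ.erase i, g i k * h k i ∈ Ppow O ϖ m := fun k hk =>
      mul_mem_Ppow_right (hhO k i) (hgoff i k (Or.inl
        ⟨hi, fun hk' => Finset.ne_of_mem_erase hk (Fin.ext (hk'.trans hi.symm))⟩))
    rw [Matrix.mul_apply, ← Finset.add_sum_erase _ _ (Finset.mem_univ i)]
    convert add_mem_Ppow (add_mem_Ppow (mul_mem_Ppow_right (hhO i i) (hgc i i ⟨hi, hi⟩))
      (hhc i i ⟨hi, hi⟩)) (sum_mem_Ppow hoff_row) using 1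
    ring

lemma inv_mem_JVshape (σ : E ≃+* E) (hσO : ∀ x ∈ O, σ x ∈ O) (hϖF : σ ϖ = ϖ)
    {h : Matrix (Fin (2 * n + 1)) (Fin (2 * n + 1)) E} (hJ : h ∈ JVshape O ϖ n m)
    (hU : h ∈ UOddSet σ n) : h⁻¹ ∈ JVshape O ϖ n m := by
  obtain ⟨hO, hoff, hc⟩ := hJ
  refine ⟨fun i j => ?_, fun i j hij => ?_, fun i j hij => ?_⟩ <;>
    rw [inv_apply_of_mem_UOddSet hU] <;> have := val_rev_eq_iff i <;> have := val_rev_eq_iff j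
  · exact hσO _ (hO _ _)
  · exact map_mem_Ppow σ hσO hϖF (hoff _ _ (by tauto))
  · exact map_sub_one_mem_Ppow σ hσO hϖF (hc _ _ (by tauto))

end Shapes

def JVSubmonoid (σ : E ≃+* E) (O : Subring E) (ϖ : E) (n m : ℕ) :
    Submonoid (Matrix (Fin (2 * n + 1)) (Fin (2 * n + 1)) E) where
  carrier := JVshape O ϖ n m ∩ UOddSet σ n
  mul_mem' hg hh := ⟨mul_mem_JVshape hg.1 hh.1, mul_mem_UOddSet hg.2 hh.2⟩
  one_mem' := ⟨one_smul E (1 : Matrix (Fin (2 * n + 1)) (Fin (2 * n + 1)) E) ▸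
    smul_one_mem_JVshape O.one_mem ((sub_self (1 : E)).symm ▸ zero_mem_Ppow _), one_mem_UOddSet⟩

lemma inv_mem_JVSubmonoid {σ : E ≃+* E} {O : Subring E} {ϖ : E} (hσO : ∀ x ∈ O, σ x ∈ O)
    (hϖF : σ ϖ = ϖ) {n m : ℕ}
    {h : Matrix (Fin (2 * n + 1)) (Fin (2 * n + 1)) E} (hh : h ∈ JVSubmonoid σ O ϖ n m) :
    h⁻¹ ∈ JVSubmonoid σ O ϖ n m :=
  ⟨inv_mem_JVshape σ hσO hϖF hh.1 hh.2, inv_mem_UOddSet hh.2⟩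

section CentralEntry

variable {σ : E ≃+* E} {O : Subring E} {ϖ : E} {n m : ℕ}

lemma conj_mul_self_sub_one_mem_Ppow (hσO : ∀ x ∈ O, σ x ∈ O) (hϖF : σ ϖ = ϖ) (hϖ0 : ϖ ≠ 0)
    {g : Matrix (Fin (2 * n + 1)) (Fin (2 * n + 1)) E} (hJ : g ∈ JVshape O ϖ n m)
    (hU : g ∈ UOddSet σ n) (c : Fin (2 * n + 1)) (hc : (c : ℕ) = n) :
    σ (g c c) * g c c - 1 ∈ Ppow O ϖ (2 * m) := by
  have hentry := congrFun (congrFun hU c) c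
  have hcc : c.rev = c := Fin.ext (by rw [Fin.val_rev]; omega)
  rw [Matrix.mul_apply, ← Finset.add_sum_erase _ _ (Finset.mem_univ c)] at hentry
  simp only [mul_wMat_apply, Matrix.transpose_apply, Matrix.map_apply, hcc, wMat,
    show (c : ℕ) + c + 1 = 2 * n + 1 by omega, if_true] at hentry
  have hoff : ∀ k ∈ Finset.univ.erase c, σ (g k.rev c) * g k c ∈ Ppow O ϖ (m + m) := by
    intro k hk
    have hkn : (k : ℕ) ≠ n := fun h => Finset.ne_of_mem_erase hk (Fin.ext (h.trans hc.symm))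
    exact mul_mem_Ppow_add hϖ0
      (map_mem_Ppow σ hσO hϖF (hJ.2.1 _ _ (Or.inr ⟨(val_rev_eq_iff k).not.mpr hkn, hc⟩)))
      (hJ.2.1 _ _ (Or.inr ⟨hkn, hc⟩))
  rw [two_mul, show σ (g c c) * g c c - 1 = -∑ k ∈ Finset.univ.erase c, σ (g k.rev c) * g k c by
    linear_combination hentry]
  exact neg_mem_Ppow (sum_mem_Ppow hoff)

/-- For `α = (1 + β) / (1 + β̄)`, `ᾱβ - 1 = (β̄β - 1) / (1 + β)`, and `1 + β` is a unit because
the residue characteristic is odd. -/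
lemma exists_norm_one_conj_mul_sub_one_mem_Ppow (hσinv : ∀ x, σ (σ x) = x)
    (hσO : ∀ x ∈ O, σ x ∈ O) (hϖF : σ ϖ = ϖ) (hϖO : ϖ ∈ O) (hϖnu : ϖ⁻¹ ∉ O)
    (hϖgen : ∀ x ∈ O, x⁻¹ ∉ O → x ∈ Ppow O ϖ 1) (h2 : (2 : E) ≠ 0) (hodd : (2 : E)⁻¹ ∈ O)
    (hm : 1 ≤ m) {β : E} (hβ : β - 1 ∈ Ppow O ϖ m) (hββ : σ β * β - 1 ∈ Ppow O ϖ (2 * m)) :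
    ∃ α : E, α * σ α = 1 ∧ α - 1 ∈ Ppow O ϖ m ∧ σ α * β - 1 ∈ Ppow O ϖ (2 * m) := by
  have hβ' : σ β - 1 ∈ Ppow O ϖ m := map_sub_one_mem_Ppow σ hσO hϖF hβ
  have hunit : ∀ x : E, x - 1 ∈ Ppow O ϖ m → 1 + x ≠ 0 ∧ (1 + x)⁻¹ ∈ O := fun x hx =>
    ne_zero_and_inv_mem_of_sub_mem_Ppow_one hϖO hϖnu hϖgen h2 hodd
      ((by ring : x - 1 = 1 + x - 2) ▸ Ppow_natCast_anti hϖO hm hx)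
  obtain ⟨hne, hinv⟩ := hunit β hβ
  obtain ⟨hne', hinv'⟩ := hunit (σ β) hβ'
  have hσα : σ ((1 + β) * (1 + σ β)⁻¹) = (1 + σ β) * (1 + β)⁻¹ := by simp [hσinv]
  refine ⟨(1 + β) * (1 + σ β)⁻¹, ?_, ?_, ?_⟩
  · rw [hσα]
    field_simp
  · convert mul_mem_Ppow_right hinv' (sub_mem_Ppow hβ hβ') using 1
    field_simp
    ring
  · rw [hσα]
    convert mul_mem_Ppow_right hinv hββ using 1
    field_simp
    ring

lemma smul_mem_KV {g : Matrix (Fin (2 * n + 1)) (Fin (2 * n + 1)) E}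
    (hJ : g ∈ JVshape O ϖ n m) (hU : g ∈ UOddSet σ n) {a : E} (haO : a ∈ O)
    (ha : a * σ a = 1) (c : Fin (2 * n + 1)) (hc : (c : ℕ) = n)
    (hac : a * g c c - 1 ∈ Ppow O ϖ (2 * m)) : a • g ∈ KV σ O ϖ n m := by
  refine ⟨⟨fun i j => O.mul_mem haO (hJ.1 i j),
    fun i j hij => mul_mem_Ppow_left haO (hJ.2.1 i j hij), fun i j ⟨hi, hj⟩ => ?_⟩,
    smul_one_mul a g ▸ mul_mem_UOddSet (smul_one_mem_UOddSet ha) hU⟩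
  obtain rfl : i = c := Fin.ext (hi.trans hc.symm)
  obtain rfl : j = i := Fin.ext (hj.trans hi.symm)
  exact hac

end CentralEntry

theorem statement7_general (E : Type) [Field E] [CharZero E]
    (σ : E ≃+* E) (hσinv : ∀ x, σ (σ x) = x)
    (O : Subring E) (hσO : ∀ x ∈ O, σ x ∈ O)
    (ϖ : E) (hϖO : ϖ ∈ O) (hϖ0 : ϖ ≠ 0) (hϖnu : ϖ⁻¹ ∉ O)
    (hϖgen : ∀ x ∈ O, x⁻¹ ∉ O → x ∈ Ppow O ϖ 1) (hϖF : σ ϖ = ϖ)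
    (hodd : (2 : E)⁻¹ ∈ O)
    (n m : ℕ) (hm : 1 ≤ m) :
    (Submonoid.closure
        ((KV σ O ϖ n m ∪
            {c | ∃ α : E, α * σ α = 1 ∧ α - 1 ∈ Ppow O ϖ (m : ℤ) ∧
              c = α • (1 : Matrix (Fin (2 * n + 1)) (Fin (2 * n + 1)) E)}) ∪
          (fun a => a⁻¹) ''
            (KV σ O ϖ n m ∪
              {c | ∃ α : E, α * σ α = 1 ∧ α - 1 ∈ Ppow O ϖ (m : ℤ) ∧
                c = α • (1 : Matrix (Fin (2 * n + 1)) (Fin (2 * n + 1)) E)})) :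
      Set (Matrix (Fin (2 * n + 1)) (Fin (2 * n + 1)) E)) =
      JVshape O ϖ n m ∩ UOddSet σ n := by
  have hgen : KV σ O ϖ n m ∪
      {c | ∃ α : E, α * σ α = 1 ∧ α - 1 ∈ Ppow O ϖ (m : ℤ) ∧
        c = α • (1 : Matrix (Fin (2 * n + 1)) (Fin (2 * n + 1)) E)} ⊆
      JVSubmonoid σ O ϖ n m := by
    rintro _ (⟨hK, hU⟩ | ⟨α, hα, hα1, rfl⟩)
    · exact ⟨KVshape_subset_JVshape hϖO hK, hU⟩
    · exact ⟨smul_one_mem_JVshape (mem_of_sub_one_mem_Ppow hϖO hα1) hα1,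
        smul_one_mem_UOddSet hα⟩
  refine Set.Subset.antisymm (Submonoid.closure_le.mpr (Set.union_subset hgen ?_)) ?_
  · rintro _ ⟨h, hh, rfl⟩
    exact inv_mem_JVSubmonoid hσO hϖF (hgen hh)
  rintro g ⟨hJ, hU⟩
  let c : Fin (2 * n + 1) := ⟨n, by omega⟩
  obtain ⟨α, hα, hα1, hαg⟩ := exists_norm_one_conj_mul_sub_one_mem_Ppow hσinv hσO hϖF hϖO hϖnu
    hϖgen two_ne_zero hodd hm (hJ.2.2 c c ⟨rfl, rfl⟩)
    (conj_mul_self_sub_one_mem_Ppow hσO hϖF hϖ0 hJ hU c rfl)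
  have hσαO : σ α ∈ O := mem_of_sub_one_mem_Ppow hϖO (map_sub_one_mem_Ppow σ hσO hϖF hα1)
  have hσα : σ α * σ (σ α) = 1 := by rw [hσinv, mul_comm, hα]
  have hg : g = (α • 1) * (σ α • g) := by rw [smul_one_mul, smul_smul, hα, one_smul]
  rw [hg]
  exact mul_mem (Submonoid.subset_closure (Or.inl (Or.inr ⟨α, hα, hα1, rfl⟩)))
    (Submonoid.subset_closure (Or.inl (Or.inl (smul_mem_KV hJ hU hσαO hσα c rfl hαg))))

/-- For `n ≥ 1` and even `2m > 0`, the subgroup of `U_{2n+1}` generated by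
`K_{2m}^V` together with the central elements `{α·1 : α ᾱ = 1, α ∈ 1+𝔭_E^m}` is exactly
`J_{2m}^V`. -/
theorem statement7 (E : Type) [Field E] [CharZero E]
    (σ : E ≃+* E) (hσinv : ∀ x, σ (σ x) = x) (hσne : σ ≠ RingEquiv.refl E)
    (O : Subring E) (hval : ∀ x : E, x ∈ O ∨ x⁻¹ ∈ O) (hσO : ∀ x ∈ O, σ x ∈ O)
    (ϖ : E) (hϖO : ϖ ∈ O) (hϖ0 : ϖ ≠ 0) (hϖnu : ϖ⁻¹ ∉ O)
    (hϖgen : ∀ x ∈ O, x⁻¹ ∉ O → x ∈ Ppow O ϖ 1) (hϖF : σ ϖ = ϖ)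
    (hodd : (2 : E)⁻¹ ∈ O)
    (n m : ℕ) (hn : 1 ≤ n) (hm : 1 ≤ m) :
    (Submonoid.closure
        ((KV σ O ϖ n m ∪
            {c | ∃ α : E, α * σ α = 1 ∧ α - 1 ∈ Ppow O ϖ (m : ℤ) ∧
              c = α • (1 : Matrix (Fin (2 * n + 1)) (Fin (2 * n + 1)) E)}) ∪
          (fun a => a⁻¹) ''
            (KV σ O ϖ n m ∪
              {c | ∃ α : E, α * σ α = 1 ∧ α - 1 ∈ Ppow O ϖ (m : ℤ) ∧
                c = α • (1 : Matrix (Fin (2 * n + 1)) (Fin (2 * n + 1)) E)})) :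
      Set (Matrix (Fin (2 * n + 1)) (Fin (2 * n + 1)) E)) =
      JVshape O ϖ n m ∩ UOddSet σ n :=
  statement7_general E σ hσinv O hσO ϖ hϖO hϖ0 hϖnu hϖgen hϖF hodd n m hm

end Newforms
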